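/- Let E_0, E_1, …, E_n and W_1, …, W_n be real normed vector spaces, let f_i : E_{i−1} × W_i → E_i for 1 ≤ i ≤ n and L : E_n → ℝ be given. Fix an input x ∈ E_0 and weights w_i ∈ W_i, and define d_0 = x and d_i = f_i(d_{i−1}, w_i). Assume each f_i is differentiable at (d_{i−1}, w_i) and L is differentiable at d_n. Define continuous linear maps r_{n+1} : E_n → ℝ by r_{n+1} = DL(d_n), and for 1 ≤ i ≤ n, r_i : E_{i−1} → ℝ by r_i = r_{i+1} ∘ ∂₁f_i(d_{i−1}, w_i), where ∂₁f_i denotes the partial Fréchet derivative of f_i in its first argument. Then for every 1 ≤ i ≤ n, the Fréchet derivative at w_i of the map v ↦ L( f_n( … f_{i+1}( f_i(d_{i−1}, v), w_{i+1}) …, w_n) ) equals r_{i+1} ∘ ∂₂f_i(d_{i−1}, w_i), where ∂₂f_i denotes the partial Fréchet derivative of f_i in its second argument. -/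

import Mathlib

/-- The layer activations: `activations F w x 0 = x` and
`activations F w x (i+1) = f_{i+1}(activations F w x i, w_{i+1})`,
where `F i : E i × W (i+1) → E (i+1)` plays the role of `f_{i+1}`
(Equation (1)). -/
def activations {E : ℕ → Type*} {W : ℕ → Type*}
    (F : ∀ i, E i × W (i + 1) → E (i + 1)) (w : ∀ i, W i) (x : E 0) :
    ∀ i, E i
  | 0 => x
  | (i + 1) => F i (activations F w x i, w (i + 1))

/-- Backward propagation computes the gradient of the loss with respect to each
weight: with `d_i` the activations, `r_{n+1} = DL(d_n)` and
`r_i = r_{i+1} ∘ ∂₁f_i(d_{i−1}, w_i)` (here `R i = r_{i+1} : E i →L[ℝ] ℝ`),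
the Fréchet derivative at `w_i` of
`v ↦ L(f_n(… f_{i+1}(f_i(d_{i−1}, v), w_{i+1}) …, w_n))` equals
`g_i = r_{i+1} ∘ ∂₂f_i(d_{i−1}, w_i)` (Equations (2)–(5)). -/
theorem backward_propagation_gradient (n : ℕ) (hn : 1 ≤ n)
    (E : ℕ → Type*) (W : ℕ → Type*)
    [∀ i, NormedAddCommGroup (E i)] [∀ i, NormedSpace ℝ (E i)]
    [∀ i, NormedAddCommGroup (W i)] [∀ i, NormedSpace ℝ (W i)]
    (F : ∀ i, E i × W (i + 1) → E (i + 1)) (L : E n → ℝ)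
    (x : E 0) (w : ∀ i, W i)
    (hF : ∀ i < n, DifferentiableAt ℝ (F i) (activations F w x i, w (i + 1)))
    (hL : DifferentiableAt ℝ L (activations F w x n))
    (R : ∀ i, E i →L[ℝ] ℝ)
    (hRn : R n = fderiv ℝ L (activations F w x n))
    (hR : ∀ i < n, R i = (R (i + 1)).comp
      (fderiv ℝ (fun u => F i (u, w (i + 1))) (activations F w x i))) :
    ∀ i < n, HasFDerivAt
      (fun v : W (i + 1) =>
        L (activations F (Function.update w (i + 1) v) x n))
      ((R (i + 1)).comp
        (fderiv ℝ (fun v : W (i + 1) => F i (activations F w x i, v)) (w (i + 1))))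
      (w (i + 1)) := by
  intro i hi
  have hact : ∀ (v : W (i + 1)), ∀ j ≤ i,
      activations F (Function.update w (i + 1) v) x j = activations F w x j := by
    intro v j hj
    induction j with
    | zero => rfl
    | succ j ih =>
      simp only [activations]
      rw [ih (Nat.le_of_succ_le hj), Function.update_of_ne (by omega)]
  obtain ⟨k, rfl⟩ : ∃ k, n = i + 1 + k := ⟨n - (i + 1), by omega⟩
  have key : ∀ m, i + 1 + m ≤ i + 1 + k →
      ∃ A : W (i + 1) →L[ℝ] E (i + 1 + m),
        HasFDerivAt
          (fun v => activations F (Function.update w (i + 1) v) x (i + 1 + m))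
          A (w (i + 1)) ∧
        (R (i + 1 + m)).comp A = (R (i + 1)).comp
          (fderiv ℝ (fun v : W (i + 1) => F i (activations F w x i, v)) (w (i + 1))) := by
    intro m
    induction m with
    | zero =>
      intro _
      have hdiff : DifferentiableAt ℝ
          (fun v : W (i + 1) => F i (activations F w x i, v)) (w (i + 1)) :=
        (hF i hi).comp _ ((differentiableAt_const _).prodMk differentiableAt_id)
      refine ⟨fderiv ℝ (fun v : W (i + 1) => F i (activations F w x i, v)) (w (i + 1)),
        ?_, rfl⟩
      have hfun : (fun v => activations F (Function.update w (i + 1) v) x (i + 1 + 0))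
          = fun v : W (i + 1) => F i (activations F w x i, v) := by
        funext v
        show F i (activations F (Function.update w (i + 1) v) x i,
          Function.update w (i + 1) v (i + 1)) = _
        rw [hact v i le_rfl, Function.update_self]
      rw [hfun]
      exact hdiff.hasFDerivAt
    | succ m ih =>
      intro hm
      obtain ⟨A, hA, hcomp⟩ := ih (by omega)
      have hjlt : i + 1 + m < i + 1 + k := by omega
      have hdiff : DifferentiableAt ℝ
          (fun u : E (i + 1 + m) => F (i + 1 + m) (u, w (i + 1 + m + 1)))
          (activations F w x (i + 1 + m)) :=
        (hF (i + 1 + m) hjlt).comp (activations F w x (i + 1 + m))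
          (differentiableAt_id.prodMk (differentiableAt_const _))
      set B := fderiv ℝ (fun u : E (i + 1 + m) => F (i + 1 + m) (u, w (i + 1 + m + 1)))
        (activations F w x (i + 1 + m)) with hB
      have hpt : (fun v => activations F (Function.update w (i + 1) v) x (i + 1 + m))
          (w (i + 1)) = activations F w x (i + 1 + m) := by
        simp only [Function.update_eq_self]
      have hBd : HasFDerivAt
          (fun u : E (i + 1 + m) => F (i + 1 + m) (u, w (i + 1 + m + 1))) B
          ((fun v => activations F (Function.update w (i + 1) v) x (i + 1 + m))
            (w (i + 1))) := by
        rw [hpt]; exact hdiff.hasFDerivAt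
      have hcompD := hBd.comp (w (i + 1)) hA
      refine ⟨B.comp A, ?_, ?_⟩
      · have hfun : (fun v => activations F (Function.update w (i + 1) v) x (i + 1 + (m + 1)))
            = (fun u : E (i + 1 + m) => F (i + 1 + m) (u, w (i + 1 + m + 1))) ∘
              (fun v => activations F (Function.update w (i + 1) v) x (i + 1 + m)) := by
          funext v
          show F (i + 1 + m) (activations F (Function.update w (i + 1) v) x (i + 1 + m),
            Function.update w (i + 1) v (i + 1 + m + 1)) = _
          rw [Function.update_of_ne (by omega)]
          rfl
        rw [hfun]
        exact hcompD
      · calc (R (i + 1 + (m + 1))).comp (B.comp A)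
            = ((R (i + 1 + m + 1)).comp B).comp A :=
              (ContinuousLinearMap.comp_assoc _ _ _).symm
          _ = (R (i + 1 + m)).comp A := by rw [hB, ← hR (i + 1 + m) hjlt]
          _ = _ := hcomp
  obtain ⟨A, hA, hcomp⟩ := key k le_rfl
  have hpt : (fun v => activations F (Function.update w (i + 1) v) x (i + 1 + k))
      (w (i + 1)) = activations F w x (i + 1 + k) := by
    simp only [Function.update_eq_self]
  have hLd : HasFDerivAt L (fderiv ℝ L (activations F w x (i + 1 + k)))
      ((fun v => activations F (Function.update w (i + 1) v) x (i + 1 + k))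
        (w (i + 1))) := by
    rw [hpt]; exact hL.hasFDerivAt
  have := hLd.comp (w (i + 1)) hA
  rw [← hcomp, hRn]
  exact this
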